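/- arXiv:2505.04187 — 6 statements merged into one kernel-verified Lean document; each statement's English description precedes it below -/
import Mathlib

section
/- Let G be a cyclic group of order n and let (g_1, ..., g_n) be a sequence of n elements of G whose total sum is zero and which has no proper nonempty subsequence summing to zero (i.e., no nonempty zero-sum subsequence of length strictly less than n). Then all terms are equal: g_1 = g_2 = ... = g_n. -/
/-!
The partial sums `g₀ + ⋯ + g_{k-1}`, `0 ≤ k < n`, are pairwise distinct, because the difference
of two of them is the sum of a nonempty proper block of terms; since `|G| = n` they exhaust `G`.
The same holds after swapping two adjacent terms `g_k, g_{k+1}`, which changes only the partial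
sum of the first `k + 1` terms. Both families exhaust `G` and agree everywhere else, so that
partial sum is unchanged too, i.e. `g_k = g_{k+1}`.
-/

open Finset Function

theorem Function.Injective.apply_eq_of_surjective_of_forall_ne {α β : Type*} {f f' : α → β}
    (hf : Surjective f) (hf' : Injective f') {a : α} (h : ∀ b ≠ a, f' b = f b) : f' a = f a := by
  obtain ⟨b, hb⟩ := hf (f' a)
  obtain rfl : b = a := by_contra fun hba => hba (hf' (by rw [h b hba, hb]))
  exact hb.symm

theorem apply_eq_apply_of_forall_covBy {α β : Type*} [LinearOrder α] [SuccOrder α]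
    [IsSuccArchimedean α] {f : α → β} (h : ∀ a b, a ⋖ b → f a = f b) (a b : α) : f a = f b := by
  refine (Succ.rec_linear (p := fun x => f a = f x) (fun x => ?_) a b).1 rfl
  by_cases hx : IsMax x
  · rw [Order.succ_eq_iff_isMax.2 hx]
  · rw [h x _ (Order.covBy_succ_of_not_isMax hx)]

section Intervals

variable {α M : Type*} [LinearOrder α] [LocallyFiniteOrderBot α] (f : α → M)

theorem CovBy.sum_Iio_comp_swap [AddCommMonoid M] [DecidableEq α] {a b m : α} (h : a ⋖ b)
    (hm : m ≠ b) : ∑ x ∈ Iio m, f (Equiv.swap a b x) = ∑ x ∈ Iio m, f x := by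
  refine sum_equiv (Equiv.swap a b) (fun x => ?_) fun _ _ => rfl
  have hab : a < m ↔ b < m := ⟨fun ham => lt_of_le_of_ne (h.ge_of_gt ham) hm.symm, h.lt.trans⟩
  rcases eq_or_ne x a with rfl | hxa
  · simpa using hab
  rcases eq_or_ne x b with rfl | hxb
  · simpa using hab.symm
  · rw [Equiv.swap_apply_of_ne_of_ne hxa hxb]

variable [LocallyFiniteOrder α] [AddCommGroup M]

theorem Finset.sum_Iio_sub_sum_Iio {a b : α} (hab : a ≤ b) :
    ∑ x ∈ Iio b, f x - ∑ x ∈ Iio a, f x = ∑ x ∈ Ico a b, f x := by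
  classical
  rw [← sum_sdiff_eq_sub (Iio_subset_Iio hab)]
  congr 1
  ext x
  simp only [mem_sdiff, mem_Iio, mem_Ico, not_lt, and_comm]

theorem CovBy.sum_Iio_sub_sum_Iio {a b : α} (h : a ⋖ b) :
    ∑ x ∈ Iio b, f x - ∑ x ∈ Iio a, f x = f a := by
  have hIco : Ico a b = {a} := coe_inj.1 (by simpa using h.Ico_eq)
  rw [Finset.sum_Iio_sub_sum_Iio f h.le, hIco, sum_singleton]

end Intervals

section ZeroSum

variable {G : Type*} [AddCommGroup G]

def HasNoProperZeroSubsum {ι : Type*} [Fintype ι] (g : ι → G) : Prop :=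
  ∀ T : Finset ι, T.Nonempty → T ≠ univ → ∑ i ∈ T, g i ≠ 0

namespace HasNoProperZeroSubsum

theorem comp_equiv {ι κ : Type*} [Fintype ι] [Fintype κ] {g : ι → G}
    (hg : HasNoProperZeroSubsum g) (e : κ ≃ ι) : HasNoProperZeroSubsum (g ∘ e) := by
  intro T hT hTuniv hT0
  refine hg (T.map e.toEmbedding) hT.map (fun h => hTuniv ?_) (by rwa [sum_map])
  rwa [← map_univ_equiv e, map_inj] at h

variable {n : ℕ} {g : Fin n → G}

theorem injective_sum_Iio (hg : HasNoProperZeroSubsum g) :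
    Injective fun k : Fin n => ∑ m ∈ Iio k, g m :=
  Injective.of_lt_imp_ne fun k l hkl heq =>
    hg (Ico k l) ⟨k, by simpa using hkl⟩ (fun h => (by simp : l ∉ Ico k l) (h ▸ mem_univ l))
      (by rw [← sum_Iio_sub_sum_Iio g hkl.le, heq, sub_self])

theorem apply_eq_of_covBy [Fintype G] (hg : HasNoProperZeroSubsum g)
    (hcard : Fintype.card G = n) {a b : Fin n} (hab : a ⋖ b) : g a = g b := by
  set s := fun k : Fin n => ∑ m ∈ Iio k, g m
  set s' := fun k : Fin n => ∑ m ∈ Iio k, g (Equiv.swap a b m)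
  have hs : Surjective s :=
    ((Fintype.bijective_iff_injective_and_card s).2 ⟨hg.injective_sum_Iio, by simp [hcard]⟩).2
  have hs' : Injective s' := (hg.comp_equiv (Equiv.swap a b)).injective_sum_Iio
  have hb : s' b = s b :=
    hs'.apply_eq_of_surjective_of_forall_ne hs fun m hm => hab.sum_Iio_comp_swap g hm
  calc g a = s b - s a := (hab.sum_Iio_sub_sum_Iio g).symm
    _ = s' b - s' a := by rw [hb]; exact congrArg _ (hab.sum_Iio_comp_swap g hab.ne).symm
    _ = g b := (hab.sum_Iio_sub_sum_Iio (g ∘ Equiv.swap a b)).trans (by simp)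

end HasNoProperZeroSubsum

end ZeroSum

theorem stmt_0_general {G : Type*} [AddCommGroup G] [Fintype G] (n : ℕ)
    (hcard : Fintype.card G = n)
    (g : Fin n → G)
    (hproper : ∀ T : Finset (Fin n), T.Nonempty → T ≠ Finset.univ →
      ∑ i ∈ T, g i ≠ 0) :
    ∀ i j : Fin n, g i = g j :=
  apply_eq_apply_of_forall_covBy fun _ _ => HasNoProperZeroSubsum.apply_eq_of_covBy hproper hcard

/-- Proposition: in a cyclic group `G` of order `n`, a zero-sum sequence of length `n`
with no proper nonempty zero-sum subsequence has all terms equal. -/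
theorem stmt_0 {G : Type*} [AddCommGroup G] [Fintype G] (n : ℕ)
    (hG : IsAddCyclic G) (hcard : Fintype.card G = n)
    (g : Fin n → G)
    (hsum : ∑ i, g i = 0)
    (hproper : ∀ T : Finset (Fin n), T.Nonempty → T ≠ Finset.univ →
      ∑ i ∈ T, g i ≠ 0) :
    ∀ i j : Fin n, g i = g j :=
  stmt_0_general n hcard g hproper
end

section
/- Let n ≥ 3 be an integer and let S = (g_1, ..., g_n) be a sequence of n elements of the cyclic group Z_n. If MZ(S) = n - 1, then the number of distinct elements appearing in S is exactly 2. -/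
/-!
Let `{j}ᶜ` be the zero-sum subsequence of length `n - 1`. Every nonempty zero-sum subsequence has
length at least `n - 1`, so it omits at most one index `k`, and then `g k = g j`. Suppose two
indices `a ≠ b` have `g a, g b ≠ g j`. Removing `a, b` (if `g a ≠ g b`) or `j, a, b` (if
`g a = g b`) leaves a zero-sum free sequence whose subset sums avoid `-g a, -g b`, resp.
`-g j, -g a, -(g j + g a)`, since adding the corresponding indices back would give a zero-sum
subsequence omitting `b`. But a zero-sum free sequence of length `m` has more than `m` subset sums
(the empty one included), so there is no room for these values in a group of order `n`. Hence
at most one entry differs from `g j`, and at least one does, as otherwise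
`g j = ∑ i, g i = n • g j = 0`.
-/

open Finset

section IndexedSubsetSum

variable {ι G : Type*} [DecidableEq G]

/-- The subset sums of `(g i)_{i ∈ W}`, the empty sum `0` included. -/
def indexedSubsetSum [AddCommMonoid G] (g : ι → G) (W : Finset ι) : Finset G :=
  W.powerset.image fun U => ∑ i ∈ U, g i

variable {g : ι → G} {W : Finset ι}

lemma mem_indexedSubsetSum [AddCommMonoid G] {v : G} :
    v ∈ indexedSubsetSum g W ↔ ∃ U ⊆ W, ∑ i ∈ U, g i = v := by
  simp [indexedSubsetSum]

lemma sum_mem_indexedSubsetSum [AddCommMonoid G] {U : Finset ι} (hU : U ⊆ W) :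
    ∑ i ∈ U, g i ∈ indexedSubsetSum g W :=
  mem_indexedSubsetSum.mpr ⟨U, hU, rfl⟩

lemma indexedSubsetSum_mono [AddCommMonoid G] {W' : Finset ι} (h : W ⊆ W') :
    indexedSubsetSum g W ⊆ indexedSubsetSum g W' :=
  image_subset_image (powerset_mono.mpr h)

lemma card_lt_card_indexedSubsetSum [AddCancelCommMonoid G] [DecidableEq ι]
    (h : ∀ U ⊆ W, U.Nonempty → ∑ i ∈ U, g i ≠ 0) : #W < #(indexedSubsetSum g W) := by
  induction W using Finset.induction_on with
  | empty => simp [indexedSubsetSum]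
  | @insert a W ha ih =>
    set A := indexedSubsetSum g W
    have hA : #W < #A := ih fun U hU => h U (hU.trans (subset_insert a W))
    have hshift : A.image (· + g a) ⊆ indexedSubsetSum g (insert a W) := by
      simp only [image_subset_iff, A, mem_indexedSubsetSum]
      rintro _ ⟨U, hU, rfl⟩
      have haU : a ∉ U := fun h => ha (hU h)
      exact ⟨insert a U, insert_subset_insert a hU, by rw [sum_insert haU, add_comm]⟩
    -- A translate of `A` lying inside `A` would equal `A` and so contain `0 = s + g a`.
    have hnot : ¬ A.image (· + g a) ⊆ A := by
      intro hsub
      have heq := eq_of_subset_of_card_le hsub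
        (card_image_of_injective _ (add_left_injective (g a))).ge
      have h0 : (0 : G) ∈ A.image (· + g a) := by
        simpa [heq] using sum_mem_indexedSubsetSum (g := g) (empty_subset W)
      obtain ⟨s, hs, hs0⟩ := mem_image.mp h0
      obtain ⟨U, hU, rfl⟩ := mem_indexedSubsetSum.mp hs
      have haU : a ∉ U := fun h => ha (hU h)
      exact h (insert a U) (insert_subset_insert a hU) (insert_nonempty a U)
        (by rwa [sum_insert haU, add_comm])
    have hlt : A ⊂ indexedSubsetSum g (insert a W) := by
      rw [ssubset_iff_of_subset (indexedSubsetSum_mono (subset_insert a W))]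
      obtain ⟨v, hv, hvA⟩ := not_subset.mp hnot
      exact ⟨v, hshift hv, hvA⟩
    rw [card_insert_of_notMem ha]
    exact (Nat.succ_le_of_lt hA).trans_lt (card_lt_card hlt)

lemma card_add_card_lt_card_of_disjoint_indexedSubsetSum [AddCancelCommMonoid G] [Fintype G]
    [DecidableEq ι] (h : ∀ U ⊆ W, U.Nonempty → ∑ i ∈ U, g i ≠ 0) {V : Finset G}
    (hV : Disjoint V (indexedSubsetSum g W)) : #W + #V < Fintype.card G :=
  calc #W + #V < #(indexedSubsetSum g W) + #V := by
        gcongr; exact card_lt_card_indexedSubsetSum h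
    _ = #(V ∪ indexedSubsetSum g W) := by rw [card_union_of_disjoint hV, add_comm]
    _ ≤ Fintype.card G := card_le_univ _

end IndexedSubsetSum

section MinimalZeroSum

variable {G : Type*} [AddCommGroup G] {n : ℕ} {g : Fin n → G}
  (hmin : ∀ U : Finset (Fin n), U.Nonempty → ∑ i ∈ U, g i = 0 → n - 1 ≤ #U)
include hmin

lemma apply_ne_zero (hn : 3 ≤ n) (i : Fin n) : g i ≠ 0 := by
  intro hi
  have := hmin {i} (singleton_nonempty i) (by rw [sum_singleton, hi])
  rw [card_singleton] at this
  omega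

variable {j : Fin n} (hj : ∑ i ∈ {j}ᶜ, g i = 0)
include hj

lemma apply_eq_of_sum_eq_zero_of_notMem {S : Finset (Fin n)} (hS : S.Nonempty)
    (hS0 : ∑ i ∈ S, g i = 0) {k : Fin n} (hk : k ∉ S) : g k = g j := by
  have hSk : S = {k}ᶜ := eq_of_subset_of_card_le
    (fun i hi => mem_compl.mpr fun hik => hk (mem_singleton.mp hik ▸ hi))
    (by rw [card_compl, card_singleton, Fintype.card_fin]; exact hmin S hS hS0)
  calc g k = ∑ i, g i := by rw [← sum_compl_add_sum {k}, ← hSk, hS0, sum_singleton, zero_add]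
    _ = g j := by rw [← sum_compl_add_sum {j}, hj, sum_singleton, zero_add]

lemma sum_ne_zero_of_notMem {S : Finset (Fin n)} (hS : S.Nonempty) {k : Fin n} (hk : k ∉ S)
    (hgk : g k ≠ g j) : ∑ i ∈ S, g i ≠ 0 :=
  fun hS0 => hgk (apply_eq_of_sum_eq_zero_of_notMem hmin hj hS hS0 hk)

lemma notMem_indexedSubsetSum [DecidableEq G] {W K : Finset (Fin n)} (hWK : Disjoint W K)
    (hK : K.Nonempty) {k : Fin n} (hkW : k ∉ W) (hkK : k ∉ K) (hgk : g k ≠ g j) {v : G}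
    (hv : v + ∑ i ∈ K, g i = 0) : v ∉ indexedSubsetSum g W := by
  rw [mem_indexedSubsetSum]
  rintro ⟨U, hU, rfl⟩
  refine sum_ne_zero_of_notMem hmin hj (hK.mono (subset_union_right (s₁ := U))) ?_ hgk ?_
  · simp only [mem_union, not_or]
    exact ⟨fun h => hkW (hU h), hkK⟩
  · rwa [sum_union (hWK.mono_left hU)]

lemma apply_eq_apply_of_apply_ne [Fintype G] [DecidableEq G] (hG : Fintype.card G ≤ n)
    {a b : Fin n} (hab : a ≠ b) (ha : g a ≠ g j) (hb : g b ≠ g j) : g a = g b := by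
  by_contra hne
  have haW : a ∉ ({a, b}ᶜ : Finset (Fin n)) := by simp
  have hbW : b ∉ ({a, b}ᶜ : Finset (Fin n)) := by simp
  have hfree : ∀ U ⊆ {a, b}ᶜ, U.Nonempty → ∑ i ∈ U, g i ≠ 0 :=
    fun U hU hUne => sum_ne_zero_of_notMem hmin hj hUne (fun h => haW (hU h)) ha
  have hV : Disjoint {-g a, -g b} (indexedSubsetSum g {a, b}ᶜ) := by
    rw [disjoint_insert_left, disjoint_singleton_left]
    exact ⟨notMem_indexedSubsetSum hmin hj (disjoint_singleton_right.mpr haW)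
        (singleton_nonempty a) hbW (by simpa using hab.symm) hb (by simp),
      notMem_indexedSubsetSum hmin hj (disjoint_singleton_right.mpr hbW)
        (singleton_nonempty b) haW (by simpa using hab) ha (by simp)⟩
  have hcount := card_add_card_lt_card_of_disjoint_indexedSubsetSum hfree hV
  rw [card_pair (neg_injective.ne hne), ← card_pair hab, card_compl_add_card,
    Fintype.card_fin] at hcount
  omega

lemma apply_ne_of_apply_ne [Fintype G] [DecidableEq G] (hn : 3 ≤ n) (hG : Fintype.card G ≤ n)
    {a b : Fin n} (hab : a ≠ b) (ha : g a ≠ g j) : g b ≠ g a := by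
  intro hba
  have hb : g b ≠ g j := hba ▸ ha
  have hja : j ≠ a := fun h => ha (h ▸ rfl)
  have hjb : j ≠ b := fun h => hb (h ▸ rfl)
  have hjW : j ∉ ({j, a, b}ᶜ : Finset (Fin n)) := by simp
  have haW : a ∉ ({j, a, b}ᶜ : Finset (Fin n)) := by simp
  have hbW : b ∉ ({j, a, b}ᶜ : Finset (Fin n)) := by simp
  have hfree : ∀ U ⊆ {j, a, b}ᶜ, U.Nonempty → ∑ i ∈ U, g i ≠ 0 :=
    fun U hU hUne => sum_ne_zero_of_notMem hmin hj hUne (fun h => haW (hU h)) ha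
  have hV : Disjoint {-g j, -g a, -(g j + g a)} (indexedSubsetSum g {j, a, b}ᶜ) := by
    rw [disjoint_insert_left, disjoint_insert_left, disjoint_singleton_left]
    refine ⟨notMem_indexedSubsetSum hmin hj (disjoint_singleton_right.mpr hjW)
        (singleton_nonempty j) haW (by simpa using hja.symm) ha (by simp),
      notMem_indexedSubsetSum hmin hj (disjoint_singleton_right.mpr haW)
        (singleton_nonempty a) hbW (by simpa using hab.symm) hb (by simp),
      notMem_indexedSubsetSum hmin hj (disjoint_right.mpr fun i hi => ?_)
        (insert_nonempty j {a}) hbW (by simp [hjb.symm, hab.symm]) hb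
        (by rw [sum_pair hja]; abel)⟩
    simp only [mem_insert, mem_singleton] at hi
    rcases hi with rfl | rfl <;> assumption
  have hj0 := apply_ne_zero hmin hn j
  have ha0 := apply_ne_zero hmin hn a
  have hVcard : #({-g j, -g a, -(g j + g a)} : Finset G) = 3 := by
    rw [card_insert_of_notMem, card_pair]
    · simpa using hj0
    · simp [ha0, neg_injective.ne (Ne.symm ha)]
  have hcount := card_add_card_lt_card_of_disjoint_indexedSubsetSum hfree hV
  have hjab : #({j, a, b} : Finset (Fin n)) = 3 := by
    rw [card_insert_of_notMem (by simp [hja, hjb]), card_pair hab]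
  rw [hVcard, ← hjab, card_compl_add_card, Fintype.card_fin] at hcount
  omega

lemma eq_of_apply_ne_of_apply_ne [Fintype G] [DecidableEq G] (hn : 3 ≤ n)
    (hG : Fintype.card G ≤ n) {a b : Fin n} (ha : g a ≠ g j) (hb : g b ≠ g j) : a = b := by
  by_contra hab
  exact apply_ne_of_apply_ne hmin hj hn hG hab ha
    (apply_eq_apply_of_apply_ne hmin hj hG hab ha hb).symm

lemma exists_apply_ne [Fintype G] (hn : 3 ≤ n) (hG : Fintype.card G = n) :
    ∃ a, g a ≠ g j := by
  by_contra! hconst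
  apply apply_ne_zero hmin hn j
  calc g j = ∑ i, g i := by rw [← sum_compl_add_sum {j}, hj, sum_singleton, zero_add]
    _ = Fintype.card G • g j := by rw [sum_congr rfl fun i _ => hconst i, sum_const, card_univ,
        Fintype.card_fin, hG]
    _ = 0 := card_nsmul_eq_zero

lemma image_eq_pair [Fintype G] [DecidableEq G] (hn : 3 ≤ n) (hG : Fintype.card G ≤ n)
    {a : Fin n} (ha : g a ≠ g j) : univ.image g = {g j, g a} := by
  ext v
  simp only [mem_image, mem_univ, true_and, mem_insert, mem_singleton]
  constructor
  · rintro ⟨i, rfl⟩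
    by_cases hi : g i = g j
    · exact Or.inl hi
    · exact Or.inr (congrArg g (eq_of_apply_ne_of_apply_ne hmin hj hn hG hi ha))
  · rintro (rfl | rfl)
    exacts [⟨j, rfl⟩, ⟨a, rfl⟩]

end MinimalZeroSum

/-- If `S` is a sequence of `n ≥ 3` elements of `ℤ/nℤ` with `MZ(S) = n - 1`,
then `S` has exactly 2 distinct elements. -/
theorem stmt_1 (n : ℕ) (hn : 3 ≤ n) (g : Fin n → ZMod n)
    (hMZ : IsLeast {m : ℕ | ∃ T : Finset (Fin n),
      T.Nonempty ∧ ∑ i ∈ T, g i = 0 ∧ T.card = m} (n - 1)) :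
    (Finset.univ.image g).card = 2 := by
  have : NeZero n := ⟨by omega⟩
  obtain ⟨⟨T, -, hT0, hTcard⟩, hlb⟩ := hMZ
  have hmin : ∀ U : Finset (Fin n), U.Nonempty → ∑ i ∈ U, g i = 0 → n - 1 ≤ #U :=
    fun U hU hU0 => hlb ⟨U, hU, hU0, rfl⟩
  obtain ⟨j, hj⟩ : ∃ j, Tᶜ = {j} := card_eq_one.mp (by
    rw [card_compl, Fintype.card_fin, hTcard]; omega)
  rw [← compl_compl T, hj] at hT0
  obtain ⟨a, ha⟩ := exists_apply_ne hmin hT0 hn (ZMod.card n)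
  rw [image_eq_pair hmin hT0 hn (ZMod.card n).le ha, card_pair ha.symm]
end

section
/- Let n ≥ 3 be an integer and let S = (g_1, ..., g_n) be a sequence of n elements of the cyclic group Z_n. If MZ(S) = n - 2, then the number of distinct elements appearing in S is at most 3. -/
/-!
Any `n - 3` terms of `S` form a zero-sum-free sequence. For zero-sum-free sequences the set of
nonempty subsums is superadditive under concatenation (`Σ(UV) ⊇ Σ(U) ⊔ (σ(U) + Σ(V))`), so it has
at least as many elements as the sequence has terms. Four distinct terms alone already have at
least seven subsums; hence `n - 3` terms including four distinct values would have at least `n`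
nonzero subsums in `ℤ/nℤ`, which is absurd. The cases `n ≤ 6` are settled by computation.
-/

open Finset

theorem Finset.exists_subset_card_eq_injOn {α β : Type*} [DecidableEq β] {f : α → β}
    {s : Finset α} {k : ℕ} (h : k ≤ #(s.image f)) : ∃ t ⊆ s, #t = k ∧ Set.InjOn f t := by
  obtain ⟨W, hW, rfl⟩ := exists_subset_card_eq h
  obtain ⟨t, hts, hinj, rfl⟩ := exists_subset_injOn_image_eq_of_surjOn (f := f) s W fun x hx ↦ by
    obtain ⟨i, hi, rfl⟩ := mem_image.1 (hW hx)
    exact ⟨i, hi, rfl⟩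
  exact ⟨t, coe_subset.1 hts, (card_image_of_injOn hinj).symm, hinj⟩

section SubsetSums

variable {ι G : Type*} [AddCommGroup G] {g : ι → G} {s t : Finset ι} {x : G}

/-- A sequence is modelled as a family `g : ι → G`, its subsequences as index sets `s`. -/
def ZeroSumFree (g : ι → G) (s : Finset ι) : Prop :=
  ∀ t ⊆ s, t.Nonempty → ∑ i ∈ t, g i ≠ 0

theorem ZeroSumFree.mono (h : ZeroSumFree g s) (hts : t ⊆ s) : ZeroSumFree g t :=
  fun u hut ↦ h u (hut.trans hts)

theorem ZeroSumFree.sum_sub_sum_ne_zero [DecidableEq ι] (h : ZeroSumFree g s) (hts : t ⊆ s)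
    (hne : (s \ t).Nonempty) : ∑ i ∈ s, g i - ∑ i ∈ t, g i ≠ 0 := by
  rw [← sum_sdiff_eq_sub hts]
  exact h _ sdiff_subset hne

variable [DecidableEq G]

def subsetSums (g : ι → G) (s : Finset ι) : Finset G :=
  (s.powerset.filter (·.Nonempty)).image fun t ↦ ∑ i ∈ t, g i

theorem mem_subsetSums : x ∈ subsetSums g s ↔ ∃ t ⊆ s, t.Nonempty ∧ ∑ i ∈ t, g i = x := by
  simp [subsetSums, and_assoc]

theorem sum_mem_subsetSums (hts : t ⊆ s) (ht : t.Nonempty) : ∑ i ∈ t, g i ∈ subsetSums g s :=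
  mem_subsetSums.2 ⟨t, hts, ht, rfl⟩

theorem subsetSums_mono (hts : t ⊆ s) : subsetSums g t ⊆ subsetSums g s := fun _ hx ↦
  let ⟨u, hut, hu, hsum⟩ := mem_subsetSums.1 hx
  mem_subsetSums.2 ⟨u, hut.trans hts, hu, hsum⟩

@[simp]
theorem subsetSums_singleton (i : ι) : subsetSums g {i} = {g i} := by
  ext x
  simp [mem_subsetSums, subset_singleton_iff, eq_comm]

theorem ZeroSumFree.card_subsetSums_lt [Fintype G] (h : ZeroSumFree g s) :
    #(subsetSums g s) < Fintype.card G :=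
  card_lt_univ_of_notMem fun h0 ↦
    let ⟨u, hus, hu, hsum⟩ := mem_subsetSums.1 h0
    h u hus hu hsum

variable [DecidableEq ι]

theorem sum_sub_sum_mem_subsetSums (hts : t ⊆ s) (hne : (s \ t).Nonempty) :
    ∑ i ∈ s, g i - ∑ i ∈ t, g i ∈ subsetSums g s := by
  rw [← sum_sdiff_eq_sub hts]
  exact sum_mem_subsetSums sdiff_subset hne

namespace ZeroSumFree

/-- The subset sums of `s ∪ t` contain those of `s` and, disjointly, the translate by `∑ s` of
those of `t`: a common value would make `(s \ u) ∪ v` a zero sum. -/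
theorem card_subsetSums_add_card_subsetSums_le (h : ZeroSumFree g (s ∪ t))
    (hst : Disjoint s t) :
    #(subsetSums g s) + #(subsetSums g t) ≤ #(subsetSums g (s ∪ t)) := by
  set σ := ∑ i ∈ s, g i
  have hshift : (subsetSums g t).image (σ + ·) ⊆ subsetSums g (s ∪ t) := by
    intro x hx
    obtain ⟨_, hy, rfl⟩ := mem_image.1 hx
    obtain ⟨v, hvt, hv, rfl⟩ := mem_subsetSums.1 hy
    rw [← sum_union (hst.mono_right hvt)]
    exact sum_mem_subsetSums (union_subset_union subset_rfl hvt) (hv.mono subset_union_right)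
  have hdisj : Disjoint (subsetSums g s) ((subsetSums g t).image (σ + ·)) := by
    refine disjoint_left.2 fun x hx hx' ↦ ?_
    obtain ⟨u, hus, hu, rfl⟩ := mem_subsetSums.1 hx
    obtain ⟨_, hy, hxy⟩ := mem_image.1 hx'
    obtain ⟨v, hvt, hv, rfl⟩ := mem_subsetSums.1 hy
    refine h (s \ u ∪ v) (union_subset_union sdiff_subset hvt) (hv.mono subset_union_right) ?_
    rw [sum_union ((hst.mono_right hvt).mono_left sdiff_subset), sum_sdiff_eq_sub hus, ← hxy]
    abel
  calc #(subsetSums g s) + #(subsetSums g t)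
      = #(subsetSums g s) + #((subsetSums g t).image (σ + ·)) := by
        rw [card_image_of_injective _ (add_right_injective σ)]
    _ = #(subsetSums g s ∪ (subsetSums g t).image (σ + ·)) := (card_union_of_disjoint hdisj).symm
    _ ≤ #(subsetSums g (s ∪ t)) :=
        card_le_card (union_subset (subsetSums_mono subset_union_left) hshift)

theorem card_le_card_subsetSums (h : ZeroSumFree g s) : #s ≤ #(subsetSums g s) := by
  induction s using Finset.induction_on with
  | empty => simp
  | insert i s hi ih =>
    have hdisj : Disjoint {i} s := disjoint_singleton_left.2 hi
    rw [insert_eq] at h ⊢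
    have hsuper := h.card_subsetSums_add_card_subsetSums_le hdisj
    rw [subsetSums_singleton, card_singleton] at hsuper
    rw [card_union_of_disjoint hdisj, card_singleton]
    have := ih (h.mono subset_union_right)
    omega

theorem seven_le_card_subsetSums_of_two_le_card_filter_ne (h : ZeroSumFree g s) (hs : #s = 4)
    (hinj : Set.InjOn g s) (hP : 2 ≤ #(s.filter fun i ↦ 2 • g i ≠ ∑ j ∈ s, g j)) :
    7 ≤ #(subsetSums g s) := by
  set σ := ∑ j ∈ s, g j
  set P := s.filter fun i ↦ 2 • g i ≠ σ
  have hPs : P ⊆ s := filter_subset _ _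
  have hcompl : ∀ t, #t < 4 → (s \ t).Nonempty := fun t ht ↦
    sdiff_nonempty_of_card_lt_card (hs ▸ ht)
  have hA : s.image g ⊆ subsetSums g s := image_subset_iff.2 fun i hi ↦
    sum_singleton g i ▸ sum_mem_subsetSums (singleton_subset_iff.2 hi) (singleton_nonempty i)
  have hB : P.image (σ - g ·) ⊆ subsetSums g s := image_subset_iff.2 fun p hp ↦
    sum_singleton g p ▸ sum_sub_sum_mem_subsetSums (singleton_subset_iff.2 (hPs hp))
      (hcompl _ (by simp))
  -- `g i = σ - g p` forces `i = p` (else the two other terms sum to zero), i.e. `2 • g p = σ`.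
  have hAB : Disjoint (s.image g) (P.image (σ - g ·)) := by
    simp only [disjoint_left, mem_image, not_exists, not_and]
    rintro _ ⟨i, hi, rfl⟩ p hp hip
    obtain ⟨hps, hphalf⟩ := mem_filter.1 hp
    by_cases hpi : p = i
    · subst hpi
      exact hphalf (by linear_combination (norm := module) -hip)
    refine h.sum_sub_sum_ne_zero (insert_subset hi (singleton_subset_iff.2 hps))
      (hcompl _ (card_le_two.trans_lt (by norm_num))) ?_
    rw [sum_pair (Ne.symm hpi)]
    linear_combination (norm := module) hip
  have hσA : σ ∉ s.image g := by
    simp only [mem_image, not_exists, not_and]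
    intro i hi hiσ
    refine h.sum_sub_sum_ne_zero (singleton_subset_iff.2 hi) (hcompl _ (by simp)) ?_
    rw [sum_singleton, hiσ, sub_self]
  have hσB : σ ∉ P.image (σ - g ·) := by
    simp only [mem_image, not_exists, not_and, sub_eq_self]
    intro p hp hp0
    exact h {p} (singleton_subset_iff.2 (hPs hp)) (singleton_nonempty p) (by simpa using hp0)
  have hσ : σ ∈ subsetSums g s := sum_mem_subsetSums subset_rfl (card_pos.1 (by omega))
  have hcard := card_le_card (insert_subset hσ (union_subset hA hB))
  have hBcard : #(P.image (σ - g ·)) = #P :=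
    card_image_of_injOn fun i hi j hj e ↦ hinj (hPs hi) (hPs hj) (sub_right_injective e)
  rw [card_insert_of_notMem (notMem_union.2 ⟨hσA, hσB⟩), card_union_of_disjoint hAB,
    card_image_of_injOn hinj, hBcard, hs] at hcard
  omega

/-- Three indices with `2 • g i = σ` give the three values `g i` and the three `2`-torsion values
`σ - τ + g m` (`τ` the sum of the three), which cannot meet since `σ ≠ 0`. -/
theorem seven_le_card_subsetSums_of_three_le_card_filter_eq (h : ZeroSumFree g s) (hs : #s = 4)
    (hinj : Set.InjOn g s) (hH : 3 ≤ #(s.filter fun i ↦ 2 • g i = ∑ j ∈ s, g j)) :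
    7 ≤ #(subsetSums g s) := by
  set σ := ∑ j ∈ s, g j
  obtain ⟨H, hHhalf, hH3⟩ := exists_subset_card_eq hH
  have hHs : H ⊆ s := hHhalf.trans (filter_subset _ _)
  set τ := ∑ i ∈ H, g i
  have hσ0 : σ ≠ 0 := h s subset_rfl (card_pos.1 (by omega))
  have htwo : 2 • τ = 3 • σ := by
    rw [← sum_nsmul, sum_congr rfl fun i hi ↦ (mem_filter.1 (hHhalf hi)).2, sum_const, hH3]
  have hA : H.image g ⊆ subsetSums g s := image_subset_iff.2 fun i hi ↦
    sum_singleton g i ▸ sum_mem_subsetSums (singleton_subset_iff.2 (hHs hi)) (singleton_nonempty i)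
  have hB : H.image (σ - τ + g ·) ⊆ subsetSums g s := image_subset_iff.2 fun m hm ↦ by
    have hsub : H.erase m ⊆ s := (erase_subset m H).trans hHs
    have := sum_sub_sum_mem_subsetSums (g := g) hsub ⟨m, mem_sdiff.2 ⟨hHs hm, notMem_erase m H⟩⟩
    rwa [sum_erase_eq_sub hm, sub_sub_eq_add_sub, add_sub_right_comm] at this
  have hAB : Disjoint (H.image g) (H.image (σ - τ + g ·)) := by
    simp only [disjoint_left, mem_image, not_exists, not_and]
    rintro _ ⟨i, hi, rfl⟩ m hm hmi
    have hihalf := (mem_filter.1 (hHhalf hi)).2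
    have hmhalf := (mem_filter.1 (hHhalf hm)).2
    exact hσ0 (by linear_combination (norm := module) -hihalf + hmhalf - htwo - 2 • hmi)
  have hσA : σ ∉ H.image g := by
    simp only [mem_image, not_exists, not_and]
    intro i hi hiσ
    refine h.sum_sub_sum_ne_zero (singleton_subset_iff.2 (hHs hi))
      (sdiff_nonempty_of_card_lt_card (by simp [hs])) ?_
    rw [sum_singleton, hiσ, sub_self]
  have hσB : σ ∉ H.image (σ - τ + g ·) := by
    simp only [mem_image, not_exists, not_and]
    intro m hm hmσ
    refine h (H.erase m) ((erase_subset m H).trans hHs) (card_pos.1 (by simp [hm, hH3])) ?_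
    rw [sum_erase_eq_sub hm]
    linear_combination (norm := module) -hmσ
  have hσ : σ ∈ subsetSums g s := sum_mem_subsetSums subset_rfl (card_pos.1 (by omega))
  have hcard := card_le_card (insert_subset hσ (union_subset hA hB))
  rw [card_insert_of_notMem (notMem_union.2 ⟨hσA, hσB⟩), card_union_of_disjoint hAB,
    card_image_of_injOn (hinj.mono hHs),
    card_image_of_injOn fun i hi j hj e ↦ hinj (hHs hi) (hHs hj) (add_right_injective _ e),
    hH3] at hcard
  omega

theorem seven_le_card_subsetSums (h : ZeroSumFree g s) (hs : #s = 4) (hinj : Set.InjOn g s) :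
    7 ≤ #(subsetSums g s) := by
  have := card_filter_add_card_filter_not (s := s) fun i ↦ 2 • g i = ∑ j ∈ s, g j
  simp only [← ne_eq] at this
  by_cases hH : 3 ≤ #(s.filter fun i ↦ 2 • g i = ∑ j ∈ s, g j)
  · exact h.seven_le_card_subsetSums_of_three_le_card_filter_eq hs hinj hH
  · exact h.seven_le_card_subsetSums_of_two_le_card_filter_ne hs hinj (by omega)

theorem card_add_four_le_card [Fintype G] {V : Finset ι} (h : ZeroSumFree g s) (hVs : V ⊆ s)
    (hV : #V = 4) (hinj : Set.InjOn g V) : #s + 4 ≤ Fintype.card G := by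
  have hsplit : V ∪ (s \ V) = s := union_sdiff_of_subset hVs
  have hsuper := (hsplit ▸ h).card_subsetSums_add_card_subsetSums_le disjoint_sdiff
  rw [hsplit] at hsuper
  have hV7 := (h.mono hVs).seven_le_card_subsetSums hV hinj
  have hrest := (h.mono (sdiff_subset (t := V))).card_le_card_subsetSums
  have hlt := h.card_subsetSums_lt
  have := card_sdiff_add_card_eq_card hVs
  omega

end ZeroSumFree

end SubsetSums

theorem ZMod.exists_sum_eq_zero_of_card_eq_four {n : ℕ} (hn3 : 3 ≤ n) (hn7 : n < 7)
    (W : Finset (ZMod n)) (hW : #W = 4) :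
    ∃ t ⊆ W, t.Nonempty ∧ #t ≤ n - 3 ∧ ∑ x ∈ t, x = 0 := by
  interval_cases n <;> revert W <;> decide

/-- If `S` is a sequence of `n ≥ 3` elements of `ℤ/nℤ` with `MZ(S) = n - 2`,
then `S` has at most 3 distinct elements. -/
theorem stmt_2 (n : ℕ) (hn : 3 ≤ n) (g : Fin n → ZMod n)
    (hMZ : IsLeast {m : ℕ | ∃ T : Finset (Fin n),
      T.Nonempty ∧ ∑ i ∈ T, g i = 0 ∧ T.card = m} (n - 2)) :
    (Finset.univ.image g).card ≤ 3 := by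
  have hfree : ∀ t : Finset (Fin n), #t ≤ n - 3 → ZeroSumFree g t := fun t ht u hut hu hsum ↦ by
    have := hMZ.2 ⟨u, hu, hsum, rfl⟩
    have := card_le_card hut
    have := card_pos.2 hu
    omega
  by_contra! h4
  obtain ⟨V, -, hV, hinj⟩ := exists_subset_card_eq_injOn (s := univ) (f := g) h4
  rcases lt_or_ge n 7 with hn7 | hn7
  · obtain ⟨t, htV, ht, htcard, htsum⟩ := ZMod.exists_sum_eq_zero_of_card_eq_four hn hn7
      (V.image g) (by rw [card_image_of_injOn hinj, hV])
    obtain ⟨u, huV, rfl⟩ := subset_image_iff.1 htV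
    rw [card_image_of_injOn (hinj.mono huV)] at htcard
    rw [sum_image (hinj.mono huV)] at htsum
    exact hfree u htcard u subset_rfl ht.of_image htsum
  · have : NeZero n := ⟨by omega⟩
    obtain ⟨U, hVU, -, hU⟩ := exists_subsuperset_card_eq (subset_univ V)
      (show #V ≤ n - 3 by omega) (by simp)
    have := (hfree U hU.le).card_add_four_le_card hVU hV hinj
    rw [ZMod.card, hU] at this
    omega
end

section
/- Let n be a positive integer, let s ∈ {0, 1, ..., n-1}, and let S = (g_1, ..., g_n) be a sequence of n elements of the cyclic group Z_n with MZ(S) = n - s. Then the number of distinct elements appearing in S is at most s + 1. -/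
/-!
Write `n = |G|` and let `k` be the number of distinct values of `g`. It suffices to find a
nonempty zero-sum subsequence of length at most `n + 1 - k`.

If `2k ≤ n + 1`, take `k` terms with distinct values and `n + 1 - 2k` further terms. Were this
subsequence zero-sum free, its nonempty subsums would avoid `0`, yet there would be at least
`2k - 1` of them from the distinct part (the terms `a`, the complements `σ - a` and the total `σ`;
`a` and `σ - a'` coincide at most twice, since in a cyclic group `2x = σ` has at most two
solutions), and each further term adds a new one: `n` in total.

If `2k ≥ n + 2` and `0` is not a value, the value set `A` and `-A` lie in `G \ {0}` and meet in at
least three points, one of which is not of order two: it gives a zero-sum pair.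
-/
open Finset

variable {ι G : Type*} [AddCommGroup G] [DecidableEq G]

def nonemptySubsetSums (g : ι → G) (s : Finset ι) : Finset G :=
  {t ∈ s.powerset | t.Nonempty}.image fun t => ∑ i ∈ t, g i

section SubsetSums

variable {g : ι → G} {s t : Finset ι} {y : G}

theorem mem_nonemptySubsetSums :
    y ∈ nonemptySubsetSums g s ↔ ∃ t ⊆ s, t.Nonempty ∧ ∑ i ∈ t, g i = y := by
  simp [nonemptySubsetSums, and_assoc]

theorem nonemptySubsetSums_mono (h : s ⊆ t) :
    nonemptySubsetSums g s ⊆ nonemptySubsetSums g t :=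
  fun _ hy ↦
    let ⟨u, hu, hne, hsum⟩ := mem_nonemptySubsetSums.1 hy
    mem_nonemptySubsetSums.2 ⟨u, hu.trans h, hne, hsum⟩

theorem sum_mem_nonemptySubsetSums (hs : s.Nonempty) :
    ∑ i ∈ s, g i ∈ nonemptySubsetSums g s :=
  mem_nonemptySubsetSums.2 ⟨s, Subset.rfl, hs, rfl⟩

theorem apply_mem_nonemptySubsetSums {i : ι} (hi : i ∈ s) : g i ∈ nonemptySubsetSums g s :=
  mem_nonemptySubsetSums.2
    ⟨{i}, singleton_subset_iff.2 hi, singleton_nonempty i, sum_singleton _ _⟩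

variable [DecidableEq ι]

theorem sum_sub_apply_mem_nonemptySubsetSums (hs : 2 ≤ #s) {i : ι} (hi : i ∈ s) :
    ∑ j ∈ s, g j - g i ∈ nonemptySubsetSums g s := by
  rw [← sum_erase_eq_sub hi]
  exact nonemptySubsetSums_mono (erase_subset i s)
    (sum_mem_nonemptySubsetSums (by rw [← card_pos, card_erase_of_mem hi]; omega))

theorem add_mem_nonemptySubsetSums_insert {a : ι} (ha : a ∉ s)
    (hy : y ∈ nonemptySubsetSums g s) :
    y + g a ∈ nonemptySubsetSums g (insert a s) := by
  obtain ⟨t, hts, -, rfl⟩ := mem_nonemptySubsetSums.1 hy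
  rw [add_comm, ← sum_insert (notMem_mono hts ha)]
  exact sum_mem_nonemptySubsetSums (insert_nonempty a t) |> nonemptySubsetSums_mono
    (insert_subset_insert a hts)

theorem card_nonemptySubsetSums_lt_insert [Finite G] {a : ι} (ha : a ∉ s)
    (h0 : 0 ∉ nonemptySubsetSums g (insert a s)) :
    #(nonemptySubsetSums g s) < #(nonemptySubsetSums g (insert a s)) := by
  refine card_lt_card <|
    (nonemptySubsetSums_mono (subset_insert a s)).ssubset_of_ne fun heq ↦ h0 ?_
  -- Otherwise the subsums of `insert a s` are closed under adding `g a`.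
  have hmul (m : ℕ) : (m + 1) • g a ∈ nonemptySubsetSums g (insert a s) := by
    induction m with
    | zero => simpa using apply_mem_nonemptySubsetSums (mem_insert_self a s)
    | succ m ih => rw [succ_nsmul]; exact add_mem_nonemptySubsetSums_insert ha (heq ▸ ih)
  simpa [Nat.sub_add_cancel (addOrderOf_pos (g a))] using hmul (addOrderOf (g a) - 1)

theorem card_nonemptySubsetSums_add_card_le [Finite G] (hst : Disjoint s t)
    (h0 : 0 ∉ nonemptySubsetSums g (s ∪ t)) :
    #(nonemptySubsetSums g s) + #t ≤ #(nonemptySubsetSums g (s ∪ t)) := by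
  induction t using Finset.induction_on with
  | empty => simp
  | insert a t ha ih =>
    rw [disjoint_insert_right] at hst
    rw [union_insert] at h0 ⊢
    have hlt := card_nonemptySubsetSums_lt_insert (by simp [hst.1, ha]) h0
    have hle := ih hst.2 fun h ↦ h0 (nonemptySubsetSums_mono (subset_insert a _) h)
    rw [card_insert_of_notMem ha]
    omega

end SubsetSums

theorem card_le_two_of_forall_add_self_eq [Fintype G] [IsAddCyclic G] {s : Finset G} {σ : G}
    (hs : ∀ x ∈ s, x + x = σ) : #s ≤ 2 := by
  obtain rfl | ⟨x₀, hx₀⟩ := s.eq_empty_or_nonempty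
  · simp
  calc #s = #(s.image (· - x₀)) := (card_image_of_injective _ (sub_left_injective)).symm
    _ ≤ #{y : G | 2 • y = 0} := by
      refine card_le_card fun y hy ↦ ?_
      obtain ⟨x, hx, rfl⟩ := mem_image.1 hy
      simp [two_nsmul, sub_add_sub_comm, hs x hx, hs x₀ hx₀]
    _ ≤ 2 := by convert IsAddCyclic.card_nsmul_eq_zero_le (α := G) two_pos

section DistinctValues

variable [DecidableEq ι] {g : ι → G} {s : Finset ι}

theorem add_self_eq_sum_of_mem_image_inter (hs : 3 ≤ #s) (h0 : 0 ∉ nonemptySubsetSums g s)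
    {x : G} (hx : x ∈ s.image g ∩ s.image (∑ j ∈ s, g j - g ·)) :
    x + x = ∑ j ∈ s, g j := by
  obtain ⟨hxA, hxB⟩ := mem_inter.1 hx
  obtain ⟨i, hi, rfl⟩ := mem_image.1 hxA
  obtain ⟨j, hj, hgj⟩ := mem_image.1 hxB
  obtain rfl | hij := eq_or_ne j i
  · exact (sub_eq_iff_eq_add.1 hgj).symm
  -- Otherwise the terms outside `{i, j}` sum to zero.
  have hji : j ∈ s.erase i := mem_erase.2 ⟨hij, hj⟩
  refine absurd (nonemptySubsetSums_mono ((erase_subset _ _).trans (erase_subset _ _))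
    (sum_mem_nonemptySubsetSums (g := g) (s := (s.erase i).erase j) ?_)) ?_
  · rw [← card_pos, card_erase_of_mem hji, card_erase_of_mem hi]; omega
  · rwa [sum_erase_eq_sub hji, sum_erase_eq_sub hi, ← hgj, sub_sub_cancel, sub_self]

theorem two_mul_card_le_card_nonemptySubsetSums_add_one [Fintype G] [IsAddCyclic G]
    (hg : Set.InjOn g s) (hs : s.Nonempty) (h0 : 0 ∉ nonemptySubsetSums g s) :
    2 * #s ≤ #(nonemptySubsetSums g s) + 1 := by
  set σ := ∑ i ∈ s, g i
  set A := s.image g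
  set B := s.image (σ - g ·)
  have hσ : σ ∈ nonemptySubsetSums g s := sum_mem_nonemptySubsetSums hs
  obtain hs1 | hs2 : #s = 1 ∨ 2 ≤ #s := by have := hs.card_pos; omega
  · have := card_pos.2 ⟨σ, hσ⟩; omega
  have hA : #A = #s := card_image_of_injOn hg
  have hB : #B = #s := card_image_of_injOn fun i hi j hj h ↦ hg hi hj (sub_right_injective h)
  have hAB : #(A ∩ B) ≤ 2 := by
    obtain hs2 | hs3 : #s = 2 ∨ 3 ≤ #s := by omega
    · exact (card_le_card inter_subset_left).trans (hA.trans hs2).le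
    · exact card_le_two_of_forall_add_self_eq fun x hx ↦
        add_self_eq_sum_of_mem_image_inter hs3 h0 hx
  have hσAB : σ ∉ A ∪ B := by
    simp only [mem_union, mem_image, not_or, not_exists, not_and, A, B]
    refine ⟨fun i hi hgi ↦ h0 ?_, fun i hi hgi ↦ h0 ?_⟩
    · simpa [hgi, σ] using sum_sub_apply_mem_nonemptySubsetSums (g := g) hs2 hi
    · simpa [sub_eq_self.1 hgi] using apply_mem_nonemptySubsetSums (g := g) hi
  have hsub : insert σ (A ∪ B) ⊆ nonemptySubsetSums g s := by
    simp only [insert_subset_iff, union_subset_iff, image_subset_iff, A, B]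
    exact ⟨hσ, fun i hi ↦ apply_mem_nonemptySubsetSums hi,
      fun i hi ↦ sum_sub_apply_mem_nonemptySubsetSums hs2 hi⟩
  have := card_le_card hsub
  rw [card_insert_of_notMem hσAB] at this
  have := card_union_add_card_inter A B
  omega

end DistinctValues

section CyclicGroup

variable [Fintype G] [IsAddCyclic G] [Fintype ι] (g : ι → G)

theorem exists_zero_sum_card_add_card_image_le_of_two_mul_card_image_le [DecidableEq ι]
    (hι : Fintype.card G ≤ Fintype.card ι) (hk : 2 * #(univ.image g) ≤ Fintype.card G + 1) :
    ∃ t : Finset ι, t.Nonempty ∧ ∑ i ∈ t, g i = 0 ∧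
      #t + #(univ.image g) ≤ Fintype.card G + 1 := by
  obtain ⟨V, -, hVinj, hVimg⟩ := exists_subset_injOn_image_eq_of_surjOn (f := g) Set.univ
    (univ.image g) (by simp [Set.SurjOn])
  have hV : #V = #(univ.image g) := by rw [← card_image_of_injOn hVinj, hVimg]
  have : Nonempty ι := Fintype.card_pos_iff.1 (Fintype.card_pos.trans_le hι)
  have hVne : V.Nonempty := by
    rw [← card_pos, hV]; exact card_pos.2 (univ_nonempty.image g)
  obtain ⟨D, hD, hDcard⟩ : ∃ D ⊆ univ \ V, #D = Fintype.card G + 1 - 2 * #(univ.image g) :=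
    exists_subset_card_eq (by have := hVne.card_pos; rw [card_univ_sdiff]; omega)
  have hVD : Disjoint V D := disjoint_of_subset_right hD disjoint_sdiff
  by_cases h0 : 0 ∈ nonemptySubsetSums g (V ∪ D)
  · obtain ⟨t, ht, htne, hsum⟩ := mem_nonemptySubsetSums.1 h0
    refine ⟨t, htne, hsum, ?_⟩
    have := (card_le_card ht).trans (card_union_le V D)
    omega
  · have hgrow := card_nonemptySubsetSums_add_card_le hVD h0
    have hV2 := two_mul_card_le_card_nonemptySubsetSums_add_one hVinj hVne
      fun h ↦ h0 (nonemptySubsetSums_mono subset_union_left h)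
    have hG := card_lt_univ_of_notMem h0
    omega

theorem exists_ne_add_eq_zero_of_card_add_two_le (h0 : ∀ i, g i ≠ 0)
    (hk : Fintype.card G + 2 ≤ 2 * #(univ.image g)) : ∃ i j, i ≠ j ∧ g i + g j = 0 := by
  set A := univ.image g
  set N := A.image (- ·)
  have hA0 : (0 : G) ∉ A := by simpa [A] using h0
  have hN : #N = #A := card_image_of_injective A neg_injective
  have hAN : #(A ∪ N) < Fintype.card G :=
    card_lt_univ_of_notMem (x := 0) (by simpa [N] using hA0)
  obtain ⟨w, hw, hw2⟩ : ∃ w ∈ A ∩ N, w + w ≠ 0 := by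
    by_contra! h
    have := card_le_two_of_forall_add_self_eq h
    have := card_union_add_card_inter A N
    omega
  obtain ⟨i, -, hi⟩ := mem_image.1 (mem_inter.1 hw).1
  obtain ⟨a, ha, rfl⟩ := mem_image.1 (mem_inter.1 hw).2
  obtain ⟨j, -, rfl⟩ := mem_image.1 ha
  refine ⟨i, j, ?_, by rw [hi, neg_add_cancel]⟩
  rintro rfl
  exact hw2 (by rw [← hi]; nth_rw 2 [hi]; exact add_neg_cancel _)

theorem exists_zero_sum_card_add_card_image_le [DecidableEq ι]
    (hι : Fintype.card G ≤ Fintype.card ι) :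
    ∃ t : Finset ι, t.Nonempty ∧ ∑ i ∈ t, g i = 0 ∧
      #t + #(univ.image g) ≤ Fintype.card G + 1 := by
  obtain hk | hk := le_or_gt (2 * #(univ.image g)) (Fintype.card G + 1)
  · exact exists_zero_sum_card_add_card_image_le_of_two_mul_card_image_le g hι hk
  by_cases h0 : ∃ i, g i = 0
  · obtain ⟨i, hi⟩ := h0
    refine ⟨{i}, singleton_nonempty i, by simpa using hi, ?_⟩
    have := card_le_univ (univ.image g)
    simp only [card_singleton]
    omega
  push Not at h0
  obtain ⟨i, j, hij, hsum⟩ := exists_ne_add_eq_zero_of_card_add_two_le g h0 (by omega)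
  refine ⟨{i, j}, insert_nonempty i {j}, by rw [sum_pair hij, hsum], ?_⟩
  have := card_lt_univ_of_notMem (s := univ.image g) (by simpa using h0)
  rw [card_pair hij]
  omega

end CyclicGroup

theorem stmt_3_general (n s : ℕ) (g : Fin n → ZMod n)
    (hMZ : IsLeast {m : ℕ | ∃ T : Finset (Fin n),
      T.Nonempty ∧ ∑ i ∈ T, g i = 0 ∧ T.card = m} (n - s)) :
    (Finset.univ.image g).card ≤ s + 1 := by
  obtain ⟨T, hT, -⟩ := hMZ.1
  have : NeZero n := ⟨by rintro rfl; exact hT.ne_empty (Subsingleton.elim _ _)⟩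
  obtain ⟨t, ht, hsum, hcard⟩ := exists_zero_sum_card_add_card_image_le g (by simp)
  have := hMZ.2 ⟨t, ht, hsum, rfl⟩
  rw [ZMod.card] at hcard
  omega

/-- Main theorem: if `S` is a sequence of `n` elements of `ℤ/nℤ` (`n ≥ 1`) with
`MZ(S) = n - s` for some `s ∈ {0, ..., n-1}`, then `S` has at most `s + 1`
distinct elements. -/
theorem stmt_3 (n s : ℕ) (hn : 0 < n) (hs : s ≤ n - 1) (g : Fin n → ZMod n)
    (hMZ : IsLeast {m : ℕ | ∃ T : Finset (Fin n),
      T.Nonempty ∧ ∑ i ∈ T, g i = 0 ∧ T.card = m} (n - s)) :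
    (Finset.univ.image g).card ≤ s + 1 :=
  stmt_3_general n s g hMZ
end

section
/- Let G be a finite abelian group and let S = (g_1, ..., g_k) be a sequence of k elements of G such that 0 is not a subsequence sum of S (i.e., S has no nonempty zero-sum subsequence). Then |Σ(S)| ≥ k. -/
/-!
The `k` prefix sums `g 0 + ⋯ + g j` are subsequence sums, and they are pairwise distinct:
two equal prefix sums would make the block of terms between them a nonempty zero-sum subsequence.
-/

open Finset

theorem injective_sum_Iic_of_sum_ne_zero {ι G : Type*} [LinearOrder ι] [LocallyFiniteOrderBot ι]
    [AddCommGroup G] {g : ι → G} (h0 : ∀ T : Finset ι, T.Nonempty → ∑ i ∈ T, g i ≠ 0) :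
    Function.Injective fun j => ∑ i ∈ Iic j, g i := by
  intro a b hab
  by_contra hne
  wlog hlt : a < b generalizing a b
  · exact this hab.symm (Ne.symm hne) ((not_lt.mp hlt).lt_of_ne' hne)
  have hblock : ∑ i ∈ Iic b \ Iic a, g i = 0 := by
    rw [sum_sdiff_eq_sub (Iic_subset_Iic.mpr hlt.le)]
    exact sub_eq_zero.mpr hab.symm
  exact h0 _ ⟨b, mem_sdiff.mpr ⟨mem_Iic.mpr le_rfl, by simpa using hlt⟩⟩ hblock

theorem stmt_5_general {G : Type*} [AddCommGroup G] (k : ℕ) (g : Fin k → G)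
    (h0 : ∀ T : Finset (Fin k), T.Nonempty → ∑ i ∈ T, g i ≠ 0) :
    k ≤ Set.ncard {x : G | ∃ T : Finset (Fin k),
      T.Nonempty ∧ ∑ i ∈ T, g i = x} := by
  set sums := {x : G | ∃ T : Finset (Fin k), T.Nonempty ∧ ∑ i ∈ T, g i = x}
  have hfin : sums.Finite :=
    (Set.finite_range fun T : Finset (Fin k) => ∑ i ∈ T, g i).subset fun _ ⟨T, _, hT⟩ => ⟨T, hT⟩
  calc k = (Set.univ : Set (Fin k)).ncard := by simp
    _ ≤ sums.ncard := Set.ncard_le_ncard_of_injOn (fun j => ∑ i ∈ Iic j, g i)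
      (fun j _ => ⟨Iic j, ⟨j, mem_Iic.mpr le_rfl⟩, rfl⟩)
      (injective_sum_Iic_of_sum_ne_zero h0).injOn hfin

/-- Lemma: if `S = (g_1, ..., g_k)` has no nonempty zero-sum subsequence,
then `|Σ(S)| ≥ k`. -/
theorem stmt_5 {G : Type*} [AddCommGroup G] [Fintype G] (k : ℕ) (g : Fin k → G)
    (h0 : ∀ T : Finset (Fin k), T.Nonempty → ∑ i ∈ T, g i ≠ 0) :
    k ≤ Set.ncard {x : G | ∃ T : Finset (Fin k),
      T.Nonempty ∧ ∑ i ∈ T, g i = x} :=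
  stmt_5_general k g h0
end

section
/- Let n be a positive integer and let S = (g_1, ..., g_n) be a sequence of n elements of the cyclic group Z_n whose number of distinct elements is s. Then S contains a nonempty zero-sum subsequence of length at most n - s + 1. -/
/-!
Keep one index for each of the `s` distinct values `v` of `g` and list the remaining `k = n - s`
indices. The `k + 1` prefix sums `σ 0, …, σ k` of the list and the `s` elements `σ k + v`
are `n + 1` elements of a group of order `n`, so two of them coincide. Equal prefix sums give
a zero-sum block of length at most `k`; `σ i = σ k + v` gives a zero-sum subsequence made of
the tail of the list after position `i` and the kept index of value `v`, of length at most `k + 1`.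
-/

open Finset Function

theorem Finset.exists_injOn_image_range_eq {ι : Type*} [DecidableEq ι] [Nonempty ι]
    (R : Finset ι) : ∃ e : ℕ → ι, Set.InjOn e (range #R) ∧ (range #R).image e = R := by
  refine ⟨fun t => R.toList.getD t (Classical.arbitrary ι), ?_, ?_⟩
  · intro a ha b hb hab
    simp only [coe_range, Set.mem_Iio, ← length_toList] at ha hb
    simp only [List.getD_eq_getElem _ _ ha, List.getD_eq_getElem _ _ hb] at hab
    exact (R.nodup_toList.getElem_inj_iff).mp hab
  · ext x
    rw [mem_image, ← mem_toList, List.mem_iff_getElem, ← length_toList]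
    simp only [mem_range]
    constructor
    · rintro ⟨t, ht, rfl⟩
      exact ⟨t, ht, (List.getD_eq_getElem _ _ ht).symm⟩
    · rintro ⟨t, ht, rfl⟩
      exact ⟨t, ht, List.getD_eq_getElem _ _ ht⟩

theorem exists_sum_Ico_eq_zero_or_sum_Ico_add_eq_zero {G : Type*} [AddCommGroup G] [Fintype G]
    [DecidableEq G] (f : ℕ → G) (k : ℕ) (B : Finset G) (hcard : Fintype.card G ≤ k + #B) :
    (∃ i j, i < j ∧ j ≤ k ∧ ∑ t ∈ Ico i j, f t = 0) ∨
      ∃ i ≤ k, ∃ b ∈ B, ∑ t ∈ Ico i k, f t + b = 0 := by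
  by_contra! ⟨hblock, htail⟩
  set σ : ℕ → G := fun i => ∑ t ∈ range i, f t
  have hσ : ∀ i ≤ k, ∑ t ∈ Ico i k, f t = σ k - σ i := fun i hi => sum_Ico_eq_sub f hi
  have hσ_ne : ∀ i j, i < j → j ≤ k → σ i ≠ σ j := fun i j hij hj h =>
    hblock i j hij hj (by rw [sum_Ico_eq_sub f hij.le]; exact sub_eq_zero.mpr h.symm)
  have hA : #((range (k + 1)).image σ) = k + 1 := by
    rw [card_image_of_injOn, card_range]
    intro i hi j hj hij
    simp only [coe_range, Set.mem_Iio] at hi hj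
    rcases lt_trichotomy i j with h | h | h
    · exact absurd hij (hσ_ne i j h (by omega))
    · exact h
    · exact absurd hij.symm (hσ_ne j i h (by omega))
  have hB : #(B.image (σ k + ·)) = #B := card_image_of_injective _ (add_right_injective _)
  have hdisj : Disjoint ((range (k + 1)).image σ) (B.image (σ k + ·)) := by
    simp only [disjoint_left, mem_image, mem_range, not_exists, not_and]
    rintro _ ⟨i, hi, rfl⟩ b hb hσb
    exact htail i (by omega) b hb (by rw [hσ i (by omega), ← hσb]; abel)
  have := card_le_univ ((range (k + 1)).image σ ∪ B.image (σ k + ·))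
  rw [card_union_of_disjoint hdisj, hA, hB] at this
  omega

theorem exists_zero_sum_card_le_card_sub_card_image_add_one {G ι : Type*} [AddCommGroup G]
    [Fintype G] [DecidableEq G] [Fintype ι] (g : ι → G)
    (hcard : Fintype.card G ≤ Fintype.card ι) :
    ∃ T : Finset ι, T.Nonempty ∧ ∑ i ∈ T, g i = 0 ∧
      #T ≤ Fintype.card ι - #(univ.image g) + 1 := by
  classical
  have : Nonempty ι := Fintype.card_pos_iff.mp (Fintype.card_pos.trans_le hcard)
  set V := univ.image g
  have hsec : ∀ b ∈ V, g (invFun g b) = b := fun b hb => invFun_eq (by simpa [V] using hb)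
  set D := V.image (invFun g)
  have hD : #D = #V := card_image_of_injOn fun a ha b hb hab => by
    rw [← hsec a ha, ← hsec b hb, hab]
  obtain ⟨e, he, heR⟩ := (Dᶜ).exists_injOn_image_range_eq
  have hk : #Dᶜ = Fintype.card ι - #V := by rw [card_compl, hD]
  set k := #Dᶜ
  have hblock : ∀ {i j}, j ≤ k →
      (Ico i j).image e ⊆ Dᶜ ∧ #((Ico i j).image e) = j - i ∧
      ∑ x ∈ (Ico i j).image e, g x = ∑ t ∈ Ico i j, g (e t) := by
    intro i j hj
    have hinj : Set.InjOn e (Ico i j) := he.mono fun t ht => by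
      simp only [coe_Ico, Set.mem_Ico, coe_range, Set.mem_Iio] at ht ⊢; omega
    refine ⟨?_, by rw [card_image_of_injOn hinj, Nat.card_Ico], sum_image hinj⟩
    exact heR ▸ image_subset_image fun t ht => by simp only [mem_Ico, mem_range] at ht ⊢; omega
  have hkV : Fintype.card G ≤ k + #V := by rw [hk]; have := card_le_univ V; omega
  rcases exists_sum_Ico_eq_zero_or_sum_Ico_add_eq_zero (g ∘ e) k V hkV with
    ⟨i, j, hij, hj, hsum⟩ | ⟨i, -, b, hb, hsum⟩
  · obtain ⟨-, hcardT, hsumT⟩ := hblock (i := i) hj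
    refine ⟨(Ico i j).image e, ?_, hsumT.trans hsum, by omega⟩
    exact card_pos.mp (by omega)
  · obtain ⟨hRT, hcardT, hsumT⟩ := hblock (i := i) le_rfl
    have hnotin : invFun g b ∉ (Ico i k).image e := fun h =>
      mem_compl.mp (hRT h) (mem_image_of_mem _ hb)
    refine ⟨insert (invFun g b) ((Ico i k).image e), insert_nonempty _ _, ?_, ?_⟩
    · rw [sum_insert hnotin, hsec b hb, hsumT, add_comm]; exact hsum
    · rw [card_insert_of_notMem hnotin]; omega

/-- Corollary: a sequence of `n` elements of `ℤ/nℤ` with `s` distinct elements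
contains a nonempty zero-sum subsequence of length at most `n - s + 1`. -/
theorem stmt_6 (n s : ℕ) (hn : 0 < n) (g : Fin n → ZMod n)
    (hsupp : (Finset.univ.image g).card = s) :
    ∃ T : Finset (Fin n), T.Nonempty ∧ ∑ i ∈ T, g i = 0 ∧ T.card ≤ n - s + 1 := by
  have : NeZero n := ⟨hn.ne'⟩
  subst hsupp
  simpa using exists_zero_sum_card_le_card_sub_card_image_add_one g (by simp)
end
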